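/- arXiv:2509.18477 — 2 statements merged into one kernel-verified Lean document; each statement's English description precedes it below -/
import Mathlib

section
/- For a ≥ 1 and c ∈ (0,1), the mean b_a(c) = (L(ac) - L(a(c-1)))/a of the sigmoid weight satisfies |b_a(c) - c| ≤ 2·log 2 / a. -/
noncomputable def softplus (x : ℝ) : ℝ := Real.log (1 + Real.exp x)

noncomputable def bMean (a c : ℝ) : ℝ :=
  (softplus (a * c) - softplus (a * (c - 1))) / a

lemma softplus_shift (x : ℝ) : softplus x = x + softplus (-x) := by
  unfold softplus
  have h : (1:ℝ) + Real.exp x = Real.exp x * (1 + Real.exp (-x)) := by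
    rw [mul_add, mul_one, ← Real.exp_add]
    simp [add_comm]
  rw [h, Real.log_mul (Real.exp_ne_zero x) (by positivity), Real.log_exp]

lemma softplus_nonneg (x : ℝ) : 0 ≤ softplus x := by
  unfold softplus
  apply Real.log_nonneg
  have := Real.exp_pos x; linarith

lemma softplus_le_log_two {x : ℝ} (hx : x ≤ 0) : softplus x ≤ Real.log 2 := by
  unfold softplus
  apply Real.log_le_log (by positivity)
  have : Real.exp x ≤ 1 := Real.exp_le_one_iff.mpr hx
  linarith

theorem bMean_close_to_c (a c : ℝ) (ha : 1 ≤ a) (hc0 : 0 < c) (hc1 : c < 1) :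
    |bMean a c - c| ≤ 2 * Real.log 2 / a := by
  have ha0 : 0 < a := by linarith
  have h1 : bMean a c - c = (softplus (-(a * c)) - softplus (a * (c - 1))) / a := by
    unfold bMean
    rw [softplus_shift (a * c)]
    field_simp
    ring
  have hle1 : softplus (-(a * c)) ≤ Real.log 2 :=
    softplus_le_log_two (by nlinarith)
  have hle2 : softplus (a * (c - 1)) ≤ Real.log 2 :=
    softplus_le_log_two (by nlinarith)
  have hn1 := softplus_nonneg (-(a * c))
  have hn2 := softplus_nonneg (a * (c - 1))
  rw [h1, abs_div, abs_of_pos ha0]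
  gcongr
  rw [abs_le]
  constructor <;> nlinarith [Real.log_pos (by norm_num : (1:ℝ) < 2)]
end

section
/- There is a universal constant C₁ > 0 such that for all a ≥ 1 and all c ∈ (0,1), |ψ_a(c) - c(1-c)| ≤ C₁/a, where ψ_a(c) is the variance of σ(a(c-Z)) for Z uniform on (0,1). -/
noncomputable def logistic (x : ℝ) : ℝ := 1 / (1 + Real.exp (-x))

noncomputable def psiVar (a c : ℝ) : ℝ :=
  bMean a c * (1 - bMean a c) - (1 / a) * (logistic (a * c) - logistic (a * (c - 1)))

lemma softplus_sub_max (x : ℝ) :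
    0 ≤ softplus x - max x 0 ∧ softplus x - max x 0 ≤ Real.log 2 := by
  have hx := Real.exp_pos x
  rcases le_or_gt 0 x with h | h
  · rw [max_eq_left h]
    constructor
    · have h1 : Real.exp x ≤ 1 + Real.exp x := by linarith
      have := Real.log_le_log hx h1
      rw [Real.log_exp] at this
      simp only [softplus]; linarith
    · have hone : (1:ℝ) ≤ Real.exp x := Real.one_le_exp h
      have h1 : 1 + Real.exp x ≤ 2 * Real.exp x := by linarith
      have := Real.log_le_log (by positivity) h1
      rw [Real.log_mul (by norm_num) hx.ne', Real.log_exp] at this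
      simp only [softplus]; linarith
  · rw [max_eq_right h.le]
    constructor
    · have h1 : (1:ℝ) ≤ 1 + Real.exp x := by linarith
      simpa [softplus] using Real.log_nonneg h1
    · have he : Real.exp x < 1 := Real.exp_lt_one_iff.mpr h
      have h1 : 1 + Real.exp x ≤ 2 := by linarith
      have := Real.log_le_log (by positivity) h1
      simpa [softplus] using this

lemma logistic_mem (x : ℝ) : 0 < logistic x ∧ logistic x < 1 := by
  have hx := Real.exp_pos (-x)
  have hd : (0:ℝ) < 1 + Real.exp (-x) := by linarith
  constructor
  · exact div_pos one_pos hd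
  · rw [logistic, div_lt_one hd]; linarith

theorem psiVar_close_to_var : ∃ C₁ : ℝ, 0 < C₁ ∧
    ∀ a c : ℝ, 1 ≤ a → 0 < c → c < 1 →
      |psiVar a c - c * (1 - c)| ≤ C₁ / a := by
  set L := Real.log 2 with hLdef
  have hL : 0 < L := Real.log_pos (by norm_num)
  refine ⟨2 * L + 4 * L ^ 2 + 1, by positivity, ?_⟩
  intro a c ha hc hc1
  have ha0 : (0:ℝ) < a := lt_of_lt_of_le one_pos ha
  -- softplus bounds
  have hac : 0 ≤ a * c := by positivity
  have hac1 : a * (c - 1) < 0 := mul_neg_of_pos_of_neg ha0 (by linarith)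
  obtain ⟨hr1l, hr1u⟩ := softplus_sub_max (a * c)
  obtain ⟨hr2l, hr2u⟩ := softplus_sub_max (a * (c - 1))
  rw [max_eq_left hac] at hr1l hr1u
  rw [max_eq_right hac1.le] at hr2l hr2u
  set b := bMean a c with hbdef
  have hb : b - c = ((softplus (a * c) - a * c) - softplus (a * (c - 1))) / a := by
    rw [hbdef, bMean]; field_simp; ring
  have hbc : |b - c| ≤ L / a := by
    rw [hb, abs_div, abs_of_pos ha0]
    gcongr
    rw [abs_le]; constructor <;> linarith
  have hbcL : |b - c| ≤ L := hbc.trans (by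
    rw [div_le_iff₀ ha0]; nlinarith [hL.le])
  -- logistic part
  obtain ⟨hs1l, hs1u⟩ := logistic_mem (a * c)
  obtain ⟨hs2l, hs2u⟩ := logistic_mem (a * (c - 1))
  have hs : |logistic (a * c) - logistic (a * (c - 1))| ≤ 1 := by
    rw [abs_le]; constructor <;> linarith
  -- quadratic part
  have hq : |b * (1 - b) - c * (1 - c)| ≤ L / a * (1 + L) := by
    have heq : b * (1 - b) - c * (1 - c) = (b - c) * (1 - (b + c)) := by ring
    rw [heq, abs_mul]
    have h2 : |1 - (b + c)| ≤ 1 + L := by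
      have h12c : |1 - 2 * c| ≤ 1 := by rw [abs_le]; constructor <;> linarith
      have heq2 : 1 - (b + c) = (1 - 2 * c) - (b - c) := by ring
      rw [heq2]
      exact (abs_sub _ _).trans (add_le_add h12c hbcL)
    exact mul_le_mul hbc h2 (abs_nonneg _) (by positivity)
  -- assemble
  have key : |psiVar a c - c * (1 - c)| ≤
      L / a * (1 + L) + 1 / a * 1 := by
    have : psiVar a c - c * (1 - c) =
        (b * (1 - b) - c * (1 - c)) -
          (1 / a) * (logistic (a * c) - logistic (a * (c - 1))) := by
      rw [psiVar, ← hbdef]; ring_nf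
    rw [this]
    refine (abs_sub _ _).trans (add_le_add hq ?_)
    rw [abs_mul, abs_of_pos (by positivity : (0:ℝ) < 1 / a)]
    exact mul_le_mul_of_nonneg_left hs (by positivity)
  refine key.trans ?_
  have heq3 : L / a * (1 + L) + 1 / a * 1 = (L * (1 + L) + 1) / a := by
    field_simp
  rw [heq3]
  gcongr
  nlinarith [hL.le]
end
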